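/- arXiv:1910.09632 — 5 statements merged into one kernel-verified Lean document; each statement's English description precedes it below -/
import Mathlib

section
/- Fix an integer $n \geq 2$. Then there exist constants $C > 0$ and $x_0 > 1$ such that for all real $x \geq x_0$, $\left| \sum_{p=1}^{\lfloor x \rfloor} \binom{p-1}{n-2} \sum_{q=1}^{\lfloor x/p \rfloor} \binom{q+n-2}{n-1} - \left(\frac{1}{n!}\sum_{p=1}^{\lfloor x \rfloor} p^{-n}\binom{p-1}{n-2}\right) x^{n} \right| \leq C\, x^{n-1} \ln x$. -/
/-! With `t = x / p`, the hockey-stick identity turns the inner sum into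
`C(⌊t⌋ + n - 1, n) = ⌊t⌋.ascFactorial n / n!`, and the rising factorial lies between `(t - 1)^n`
and `(t + n)^n`, so it is `t^n / n! + O(t^(n-1))`. Weighted by `C(p - 1, n - 2) ≤ p^(n-2)`, the
`p`-th error is `O(x^(n-1) / p)`, and summing over `p ≤ x` costs a harmonic factor `1 + log x`. -/

open Finset Real
open scoped Nat

theorem sum_Icc_choose_add_sub_two {n : ℕ} (hn : 1 ≤ n) (m : ℕ) :
    ∑ q ∈ Icc 1 m, (q + n - 2).choose (n - 1) = (m + n - 1).choose n := by
  obtain ⟨j, rfl⟩ := Nat.exists_eq_add_of_le' hn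
  induction m with
  | zero => simp
  | succ m ih =>
    rw [sum_Icc_succ_top (by omega), ih, show m + 1 + (j + 1) - 1 = (m + j) + 1 by omega,
      Nat.choose_succ_succ', add_comm]
    congr 2; omega

theorem add_natCast_pow_sub_sub_one_pow_le (n : ℕ) {t : ℝ} (ht : 1 ≤ t) :
    (t + n) ^ n - (t - 1) ^ n ≤ n * (n + 1) ^ n * t ^ (n - 1) := by
  rcases Nat.eq_zero_or_pos n with rfl | hn
  · simp
  have hmax : max |t + n| |t - 1| = t + n := by
    rw [abs_of_nonneg (by positivity), abs_of_nonneg (by linarith)]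
    exact max_eq_left (by linarith)
  calc (t + n) ^ n - (t - 1) ^ n ≤ |(t + n) ^ n - (t - 1) ^ n| := le_abs_self _
    _ ≤ |t + n - (t - 1)| * n * max |t + n| |t - 1| ^ (n - 1) := abs_pow_sub_pow_le ..
    _ = (n + 1) * n * (t + n) ^ (n - 1) := by
      rw [hmax, abs_of_nonneg (by linarith)]; ring
    _ ≤ (n + 1) * n * ((n + 1) * t) ^ (n - 1) := by gcongr; nlinarith
    _ = n * (n + 1) ^ n * t ^ (n - 1) := by
      rw [mul_pow, ← pow_sub_one_mul hn.ne' ((n : ℝ) + 1)]; ring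

theorem abs_choose_floor_add_sub_pow_div_factorial_le (n : ℕ) {t : ℝ} (ht : 1 ≤ t) :
    |((⌊t⌋₊ + n - 1).choose n : ℝ) - t ^ n / n !| ≤ n * (n + 1) ^ n * t ^ (n - 1) := by
  set m := ⌊t⌋₊
  have hm : 1 ≤ m := (Nat.one_le_floor_iff t).mpr ht
  have hasc : (m.ascFactorial n : ℝ) = n ! * (m + n - 1).choose n := by
    exact_mod_cast Nat.ascFactorial_eq_factorial_mul_choose' m n
  have hlow : (t - 1) ^ n ≤ m.ascFactorial n := calc
    (t - 1) ^ n ≤ (m : ℝ) ^ n := pow_le_pow_left₀ (by linarith) (Nat.sub_one_lt_floor t).le n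
    _ ≤ m.ascFactorial n := by exact_mod_cast Nat.pow_succ_le_ascFactorial m n
  have hup : (m.ascFactorial n : ℝ) ≤ (t + n) ^ n := calc
    (m.ascFactorial n : ℝ) ≤ ((m - 1 + n : ℕ) : ℝ) ^ n := by
      have := Nat.ascFactorial_le_pow_add (m - 1) n
      rw [Nat.sub_add_cancel hm] at this
      exact_mod_cast this
    _ ≤ (t + n) ^ n := by
      gcongr; push_cast [hm]; linarith [Nat.floor_le (by linarith : (0 : ℝ) ≤ t)]
  have hfac : (1 : ℝ) ≤ n ! := by exact_mod_cast Nat.factorial_pos n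
  have hfac0 : (0 : ℝ) < n ! := by positivity
  calc |((m + n - 1).choose n : ℝ) - t ^ n / n !|
        = |(n ! * (m + n - 1).choose n - t ^ n) / n !| := by
          rw [sub_div, mul_div_cancel_left₀ _ hfac0.ne']
    _ = |(m.ascFactorial n : ℝ) - t ^ n| / n ! := by rw [abs_div, abs_of_pos hfac0, hasc]
    _ ≤ |(m.ascFactorial n : ℝ) - t ^ n| := div_le_self (abs_nonneg _) hfac
    _ ≤ (t + n) ^ n - (t - 1) ^ n := by
      refine abs_sub_le_of_le_of_le hlow hup ?_ ?_ <;> gcongr <;> linarith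
    _ ≤ n * (n + 1) ^ n * t ^ (n - 1) := add_natCast_pow_sub_sub_one_pow_le n ht

theorem abs_choose_mul_sum_choose_sub_le {n p : ℕ} (hn : 2 ≤ n) (hp : 1 ≤ p) {x : ℝ}
    (hpx : (p : ℝ) ≤ x) :
    |((p - 1).choose (n - 2) : ℝ) * ∑ q ∈ Icc 1 ⌊x / p⌋₊, ((q + n - 2).choose (n - 1) : ℝ) -
        ((p - 1).choose (n - 2) : ℝ) * ((x / p) ^ n / n !)| ≤
      n * (n + 1) ^ n * x ^ (n - 1) / p := by
  have hp0 : (0 : ℝ) < p := by exact_mod_cast hp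
  have ht : 1 ≤ x / p := (one_le_div hp0).mpr hpx
  have hinner : ∑ q ∈ Icc 1 ⌊x / p⌋₊, ((q + n - 2).choose (n - 1) : ℝ) =
      ((⌊x / p⌋₊ + n - 1).choose n : ℝ) := by
    exact_mod_cast sum_Icc_choose_add_sub_two (by omega) _
  have hcoef : ((p - 1).choose (n - 2) : ℝ) ≤ (p : ℝ) ^ (n - 2) := by
    exact_mod_cast (Nat.choose_le_pow _ _).trans (Nat.pow_le_pow_left (Nat.sub_le p 1) _)
  rw [← mul_sub, abs_mul, abs_of_nonneg (by positivity), hinner]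
  calc ((p - 1).choose (n - 2) : ℝ) * |((⌊x / p⌋₊ + n - 1).choose n : ℝ) - (x / p) ^ n / n !|
      ≤ (p : ℝ) ^ (n - 2) * (n * (n + 1) ^ n * (x / p) ^ (n - 1)) :=
        mul_le_mul hcoef (abs_choose_floor_add_sub_pow_div_factorial_le n ht) (abs_nonneg _)
          (by positivity)
    _ = n * (n + 1) ^ n * x ^ (n - 1) / p := by
      rw [show n - 1 = n - 2 + 1 by omega, div_pow, pow_succ]
      field_simp
      ring

theorem sum_Icc_floor_inv_le_one_add_log {x : ℝ} (hx : 1 ≤ x) :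
    ∑ p ∈ Icc 1 ⌊x⌋₊, (p : ℝ)⁻¹ ≤ 1 + log x := by
  have hN : (0 : ℝ) < ⌊x⌋₊ := by exact_mod_cast (Nat.one_le_floor_iff x).mpr hx
  calc ∑ p ∈ Icc 1 ⌊x⌋₊, (p : ℝ)⁻¹ = (harmonic ⌊x⌋₊ : ℝ) := by
        rw [harmonic_eq_sum_Icc]; push_cast; rfl
    _ ≤ 1 + log ⌊x⌋₊ := harmonic_le_one_add_log _
    _ ≤ 1 + log x := by gcongr; exact Nat.floor_le (by linarith)

/-- For `n ≥ 2`: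
`∑_{p=1}^{⌊x⌋} C(p-1,n-2) ∑_{q=1}^{⌊x/p⌋} C(q+n-2,n-1)
  = ((1/n!) ∑_{p=1}^{⌊x⌋} p^{-n} C(p-1,n-2)) x^n + O(x^{n-1} log x)`. -/
theorem f1_sum_asymptotic (n : ℕ) (hn : 2 ≤ n) :
    ∃ C : ℝ, 0 < C ∧ ∃ x₀ : ℝ, 1 < x₀ ∧ ∀ x : ℝ, x₀ ≤ x →
      |(∑ p ∈ Finset.Icc 1 ⌊x⌋₊, ((p - 1).choose (n - 2) : ℝ) *
            ∑ q ∈ Finset.Icc 1 ⌊x / (p : ℝ)⌋₊, ((q + n - 2).choose (n - 1) : ℝ)) -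
          (1 / (Nat.factorial n : ℝ) *
            ∑ p ∈ Finset.Icc 1 ⌊x⌋₊, ((p - 1).choose (n - 2) : ℝ) / (p : ℝ) ^ n) * x ^ n| ≤
        C * x ^ (n - 1) * Real.log x := by
  set K : ℝ := n * (n + 1) ^ n
  refine ⟨2 * K, by positivity, exp 1, one_lt_exp_iff.mpr one_pos, fun x hx => ?_⟩
  have hx1 : 1 ≤ x := (one_lt_exp_iff.mpr one_pos).le.trans hx
  have hlog : 1 ≤ log x := (le_log_iff_exp_le (by linarith)).mpr hx
  have hmain : (1 / (n ! : ℝ) * ∑ p ∈ Icc 1 ⌊x⌋₊, ((p - 1).choose (n - 2) : ℝ) / (p : ℝ) ^ n) *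
      x ^ n = ∑ p ∈ Icc 1 ⌊x⌋₊, ((p - 1).choose (n - 2) : ℝ) * ((x / p) ^ n / n !) := by
    rw [mul_sum, sum_mul]
    refine sum_congr rfl fun p _ => ?_
    rw [div_pow]; ring
  rw [hmain, ← sum_sub_distrib]
  calc _ ≤ ∑ p ∈ Icc 1 ⌊x⌋₊, K * x ^ (n - 1) / p := by
        refine (abs_sum_le_sum_abs _ _).trans (sum_le_sum fun p hp => ?_)
        obtain ⟨hp1, hpx⟩ := mem_Icc.mp hp
        exact abs_choose_mul_sum_choose_sub_le hn hp1 ((Nat.cast_le.mpr hpx).trans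
          (Nat.floor_le (by linarith)))
    _ = K * x ^ (n - 1) * ∑ p ∈ Icc 1 ⌊x⌋₊, (p : ℝ)⁻¹ := by
        rw [mul_sum]; rfl
    _ ≤ K * x ^ (n - 1) * (2 * log x) := by
        gcongr; linarith [sum_Icc_floor_inv_le_one_add_log hx1]
    _ = 2 * K * x ^ (n - 1) * log x := by ring
end

section
/- Fix an integer $n \geq 2$. Then there exist constants $C > 0$ and $x_0 > 1$ such that for all real $x \geq x_0$, $\left| \sum_{q=1}^{\lfloor x \rfloor} \binom{q+n-2}{n-2} \sum_{p=1}^{\lfloor x/q \rfloor} \binom{p}{n-1} - \left(\frac{1}{n!}\sum_{q=1}^{\lfloor x \rfloor} q^{-n}\binom{q+n-2}{n-2}\right) x^{n} \right| \leq C\, x^{n-1} \ln x$. -/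
/-!
By the hockey-stick identity the inner sum equals `C(⌊x/q⌋ + 1, n)`, and writing `n!` times this
binomial coefficient as a product of `n` factors, each within `n` of `t = x/q`, shows that it is
`t^n/n! + O(t^(n-1))`. Since `C(q+n-2, n-2) = O(q^(n-2))`, the `q`-th term of the difference is
`O(x^(n-1)/q)`, and summing over `q ≤ x` costs a harmonic sum, i.e. a factor `log x`.
-/

open Finset
open scoped Nat

theorem Nat.sum_Icc_one_choose_succ (m k : ℕ) :
    ∑ p ∈ Icc 1 m, p.choose (k + 1) = (m + 1).choose (k + 2) := by
  rw [← Nat.sum_Icc_choose]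
  refine (sum_subset (fun p hp ↦ ?_) fun p hp hp' ↦ Nat.choose_eq_zero_of_lt ?_).symm
  · simp only [mem_Icc] at hp ⊢; omega
  · simp only [mem_Icc] at hp hp'; omega

theorem Finset.abs_prod_sub_prod_le {ι R : Type*} [CommRing R] [LinearOrder R]
    [IsStrictOrderedRing R] [DecidableEq ι] (s : Finset ι) {a b : ι → R} {M ε : R}
    (ha : ∀ i ∈ s, |a i| ≤ M) (hb : ∀ i ∈ s, |b i| ≤ M) (hab : ∀ i ∈ s, |a i - b i| ≤ ε) :
    |∏ i ∈ s, a i - ∏ i ∈ s, b i| ≤ #s * ε * M ^ (#s - 1) := by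
  induction s using Finset.induction_on with
  | empty => simp
  | insert j s hj ih =>
    simp only [forall_mem_insert] at ha hb hab
    have hprod_b : |∏ i ∈ s, b i| ≤ M ^ #s := by
      simpa [abs_prod] using prod_le_prod (fun i _ ↦ abs_nonneg (b i)) hb.2
    have hpow : #s * ε * M ^ (#s - 1) * M = #s * ε * M ^ #s := by
      rcases eq_or_ne #s 0 with h | h
      · simp [h]
      · rw [mul_assoc, mul_comm _ M, mul_pow_sub_one h]
    rw [prod_insert hj, prod_insert hj, card_insert_of_notMem hj, Nat.add_sub_cancel,
      Nat.cast_succ]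
    calc |a j * ∏ i ∈ s, a i - b j * ∏ i ∈ s, b i|
        = |(∏ i ∈ s, a i - ∏ i ∈ s, b i) * a j + (a j - b j) * ∏ i ∈ s, b i| := by ring_nf
      _ ≤ #s * ε * M ^ (#s - 1) * M + ε * M ^ #s := by
        have hih := ih ha.2 hb.2 hab.2
        refine (abs_add_le _ _).trans ?_
        rw [abs_mul, abs_mul]
        gcongr
        exacts [(abs_nonneg _).trans hih, ha.1, (abs_nonneg _).trans hab.1, hab.1]
      _ = (#s + 1) * ε * M ^ #s := by rw [hpow]; ring

theorem abs_choose_floor_add_one_sub_le (n : ℕ) {t : ℝ} (ht : 0 ≤ t) :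
    |((⌊t⌋₊ + 1).choose n : ℝ) - t ^ n / n !| ≤ n ^ 2 * (t + 1) ^ (n - 1) / n ! := by
  set m := ⌊t⌋₊
  -- `n! * C(m + 1, n)` is a product of `n` factors `m + 1 - i`, each within `n` of `t`.
  have hfactor_le (i : ℕ) : ((m + 1 - i : ℕ) : ℝ) ≤ t + 1 := by
    have : ((m + 1 - i : ℕ) : ℝ) ≤ m + 1 := by exact_mod_cast Nat.sub_le (m + 1) i
    linarith [Nat.floor_le ht]
  have hfactor_ge (i : ℕ) : t - i ≤ ((m + 1 - i : ℕ) : ℝ) := by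
    have h : ((m + 1 : ℕ) : ℝ) ≤ ((m + 1 - i : ℕ) : ℝ) + i := by exact_mod_cast (by omega)
    push_cast at h
    linarith [Nat.lt_floor_add_one t]
  have hprod := abs_prod_sub_prod_le (range n) (b := fun _ ↦ t) (M := t + 1) (ε := n)
    (fun i _ ↦ (abs_of_nonneg (Nat.cast_nonneg _)).trans_le (hfactor_le i))
    (fun i _ ↦ by rw [abs_of_nonneg ht]; linarith)
    (fun i hi ↦ by
      have : (i : ℝ) + 1 ≤ n := by exact_mod_cast mem_range.mp hi
      rw [abs_le]; constructor <;> linarith [hfactor_le i, hfactor_ge i])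
  have hdesc : (n ! : ℝ) * (m + 1).choose n = ∏ i ∈ range n, ((m + 1 - i : ℕ) : ℝ) := by
    rw [← Nat.cast_prod, ← Nat.descFactorial_eq_prod_range,
      Nat.descFactorial_eq_factorial_mul_choose, Nat.cast_mul]
  rw [← hdesc, prod_const, card_range] at hprod
  have hfac : (0 : ℝ) < n ! := by positivity
  have hsplit :
      ((m + 1).choose n : ℝ) - t ^ n / n ! = (n ! * (m + 1).choose n - t ^ n) / n ! := by
    field_simp
  rw [hsplit, abs_div, abs_of_pos hfac, sq]
  gcongr

theorem Nat.choose_add_le_pow (k : ℕ) {q : ℕ} (hq : 1 ≤ q) :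
    (q + k).choose k ≤ ((k + 1) * q) ^ k :=
  (Nat.choose_le_pow _ _).trans (Nat.pow_le_pow_left (by nlinarith) k)

theorem abs_choose_mul_choose_floor_sub_le (k : ℕ) {q : ℕ} {x : ℝ} (hq : 1 ≤ q)
    (hqx : (q : ℝ) ≤ x) :
    |((q + k).choose k : ℝ) * (((⌊x / q⌋₊ + 1).choose (k + 2) : ℝ) - (x / q) ^ (k + 2) / (k + 2)!)|
      ≤ (k + 1) ^ k * (k + 2) ^ 2 * 2 ^ (k + 1) / (k + 2)! * x ^ (k + 1) * (q : ℝ)⁻¹ := by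
  have hq0 : (0 : ℝ) < q := by exact_mod_cast hq
  have ht : 1 ≤ x / q := (one_le_div hq0).mpr hqx
  have hchoose : ((q + k).choose k : ℝ) ≤ ((k + 1) * q) ^ k := by
    exact_mod_cast Nat.choose_add_le_pow k hq
  have herror := abs_choose_floor_add_one_sub_le (k + 2) (t := x / q) (by linarith)
  calc _ ≤ ((k + 1) * q) ^ k * ((k + 2) ^ 2 * (2 * (x / q)) ^ (k + 1) / (k + 2)!) := by
        rw [abs_mul, abs_of_nonneg (Nat.cast_nonneg _)]
        push_cast at herror
        gcongr
        refine herror.trans ?_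
        gcongr
        linarith
    _ = _ := by rw [mul_pow, mul_pow, div_pow]; field_simp; ring

theorem sum_choose_mul_sum_choose_sub_eq (k : ℕ) (x : ℝ) :
    (∑ q ∈ Icc 1 ⌊x⌋₊, ((q + k).choose k : ℝ) *
        ∑ p ∈ Icc 1 ⌊x / (q : ℝ)⌋₊, (p.choose (k + 1) : ℝ)) -
      (1 / ((k + 2)! : ℝ) * ∑ q ∈ Icc 1 ⌊x⌋₊, ((q + k).choose k : ℝ) / (q : ℝ) ^ (k + 2)) *
        x ^ (k + 2) =
    ∑ q ∈ Icc 1 ⌊x⌋₊, ((q + k).choose k : ℝ) *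
      (((⌊x / q⌋₊ + 1).choose (k + 2) : ℝ) - (x / q) ^ (k + 2) / (k + 2)!) := by
  simp_rw [← Nat.cast_sum, Nat.sum_Icc_one_choose_succ, mul_sum, sum_mul, ← sum_sub_distrib,
    mul_sub, div_pow]
  refine sum_congr rfl fun q _ ↦ ?_
  ring

/-- For `n ≥ 2`:
`∑_{q=1}^{⌊x⌋} C(q+n-2,n-2) ∑_{p=1}^{⌊x/q⌋} C(p,n-1)
  = ((1/n!) ∑_{q=1}^{⌊x⌋} q^{-n} C(q+n-2,n-2)) x^n + O(x^{n-1} log x)`. -/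
theorem f2_sum_asymptotic (n : ℕ) (hn : 2 ≤ n) :
    ∃ C : ℝ, 0 < C ∧ ∃ x₀ : ℝ, 1 < x₀ ∧ ∀ x : ℝ, x₀ ≤ x →
      |(∑ q ∈ Finset.Icc 1 ⌊x⌋₊, ((q + n - 2).choose (n - 2) : ℝ) *
            ∑ p ∈ Finset.Icc 1 ⌊x / (q : ℝ)⌋₊, (p.choose (n - 1) : ℝ)) -
          (1 / (Nat.factorial n : ℝ) *
            ∑ q ∈ Finset.Icc 1 ⌊x⌋₊, ((q + n - 2).choose (n - 2) : ℝ) / (q : ℝ) ^ n) * x ^ n| ≤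
        C * x ^ (n - 1) * Real.log x := by
  obtain ⟨k, rfl⟩ : ∃ k, n = k + 2 := ⟨n - 2, by omega⟩
  simp only [Nat.add_sub_cancel, show k + 2 - 1 = k + 1 from rfl,
    show ∀ q : ℕ, q + (k + 2) - 2 = q + k from fun q ↦ by omega]
  set A : ℝ := (k + 1) ^ k * (k + 2) ^ 2 * 2 ^ (k + 1) / (k + 2)!
  refine ⟨2 * A, by positivity, 3, by norm_num, fun x hx ↦ ?_⟩
  have hlog : 1 ≤ Real.log x := by
    rw [Real.le_log_iff_exp_le (by linarith)]
    linarith [Real.exp_one_lt_d9]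
  rw [sum_choose_mul_sum_choose_sub_eq]
  calc _ ≤ ∑ q ∈ Icc 1 ⌊x⌋₊, A * x ^ (k + 1) * (q : ℝ)⁻¹ := by
        refine (abs_sum_le_sum_abs _ _).trans (sum_le_sum fun q hq ↦ ?_)
        have hq := mem_Icc.mp hq
        exact abs_choose_mul_choose_floor_sub_le k hq.1
          ((Nat.cast_le.mpr hq.2).trans (Nat.floor_le (by linarith)))
    _ = A * x ^ (k + 1) * harmonic ⌊x⌋₊ := by
        rw [← mul_sum, harmonic_eq_sum_Icc]
        push_cast
        rfl
    _ ≤ A * x ^ (k + 1) * (1 + Real.log x) := by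
        gcongr
        exact harmonic_floor_le_one_add_log x (by linarith)
    _ ≤ 2 * A * x ^ (k + 1) * Real.log x := by
        have : 0 ≤ A * x ^ (k + 1) := by positivity
        nlinarith
end

section
/- Fix an integer $n \geq 2$, and for $0 \le j \le n-1$ let $s(n-1,j)$ denote the signed Stirling number of the first kind, i.e., the coefficient of $X^j$ in the polynomial $\prod_{i=0}^{n-2}(X - i)$. Then $\sum_{k=1}^{\infty} k^{-n}\left[\binom{k+n-2}{n-2} + \binom{k-1}{n-2}\right] = \sum_{j=0}^{n-1} \frac{(2\pi)^{n-j+1}\,|B_{n-j+1}|}{(n-2)!\,(n-j+1)!}\, s(n-1, j)$, where $B_l$ denotes the $l$-th Bernoulli number. -/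
/-!
Let `P(x) = x (x - 1) ⋯ (x - n + 2) = ∑ⱼ s(n-1, j) xʲ`, the falling factorial. For `m = k + 1`,
`P(m) = m (n-2)! C(k, n-2)` and `(-1)^(n-1) P(-m) = m (n-2)! C(k+n-1, n-2)`, so adding the two
expansions in powers of `m` writes the `k`-th term of the series as
`∑ⱼ s(n-1, j) (1 + (-1)^(n-j+1)) / (n-2)! · m^(-(n-j+1))`.
Summing over `k` gives `(1 + (-1)^p) ζ(p)` with `p = n - j + 1 ≥ 2`, which is
`(2π)^p |B_p| / p!` by Euler's formula when `p` is even and `0 = B_p` when `p` is odd.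
-/

open Polynomial Finset Real Nat

lemma prod_range_X_sub_C_eq_descPochhammer (R : Type*) [CommRing R] (n : ℕ) :
    ∏ i ∈ range n, (X - C (i : R)) = descPochhammer R n := by
  induction n with
  | zero => simp
  | succ n ih => rw [prod_range_succ, ih, descPochhammer_succ_right, C_eq_natCast]

lemma descPochhammer_eval_natCast_add_one (R : Type*) [CommRing R] (d k : ℕ) :
    (descPochhammer R (d + 1)).eval ((k : R) + 1) = (k + 1) * d ! * k.choose d := by
  rw [← Nat.cast_succ, descPochhammer_eval_eq_descFactorial, Nat.succ_descFactorial_succ,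
    Nat.descFactorial_eq_factorial_mul_choose]
  push_cast
  ring

lemma neg_one_pow_mul_descPochhammer_eval_neg_natCast_add_one (R : Type*) [CommRing R]
    (d k : ℕ) :
    (-1) ^ (d + 1) * (descPochhammer R (d + 1)).eval (-((k : R) + 1)) =
      (k + 1) * d ! * (k + d + 1).choose d := by
  have hasc : (k + 1).ascFactorial (d + 1) = (k + 1) * (d ! * (k + d + 1).choose d) := by
    rw [add_comm d 1, ← Nat.ascFactorial_mul_ascFactorial, Nat.ascFactorial_eq_factorial_mul_choose,
      Nat.ascFactorial_eq_factorial_mul_choose, add_right_comm k d 1]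
    simp
  rw [← ascPochhammer_eval_neg_eq_descPochhammer, neg_neg, ← Nat.cast_succ,
    ascPochhammer_nat_eq_natCast_ascFactorial, hasc]
  push_cast
  ring

lemma eval_add_neg_one_pow_mul_eval_neg {R : Type*} [CommRing R] {p : R[X]} {N : ℕ}
    (hp : p.natDegree < N) (e : ℕ) (x : R) :
    p.eval x + (-1) ^ e * p.eval (-x) =
      ∑ j ∈ range N, p.coeff j * (1 + (-1) ^ (e + j)) * x ^ j := by
  rw [eval_eq_sum_range' hp, eval_eq_sum_range' hp, mul_sum, ← sum_add_distrib]
  refine sum_congr rfl fun j _ => ?_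
  rw [neg_pow, pow_add]
  ring

lemma choose_add_choose_div_pow_eq_sum (d k : ℕ) :
    (((k + d + 1).choose d : ℝ) + k.choose d) / ((k : ℝ) + 1) ^ (d + 2) =
      ∑ j ∈ range (d + 2), ((descPochhammer ℤ (d + 1)).coeff j : ℝ) / d ! *
        ((1 + (-1) ^ (d + 2 - j + 1)) * (1 / ((k : ℝ) + 1) ^ (d + 2 - j + 1))) := by
  have hterm : ∀ j ∈ range (d + 2),
      ((descPochhammer ℤ (d + 1)).coeff j : ℝ) / d ! *
        ((1 + (-1) ^ (d + 2 - j + 1)) * (1 / ((k : ℝ) + 1) ^ (d + 2 - j + 1))) =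
      (descPochhammer ℝ (d + 1)).coeff j * (1 + (-1) ^ (d + 1 + j)) * ((k : ℝ) + 1) ^ j /
        (d ! * ((k : ℝ) + 1) ^ (d + 3)) := by
    intro j hj
    have hjd := mem_range.mp hj
    have hcoeff : ((descPochhammer ℤ (d + 1)).coeff j : ℝ) =
        (descPochhammer ℝ (d + 1)).coeff j := by
      rw [← descPochhammer_map (Int.castRingHom ℝ), coeff_map, eq_intCast]
    have hsign : (-1 : ℝ) ^ (d + 2 - j + 1) = (-1) ^ (d + 1 + j) := by
      rw [neg_one_pow_eq_pow_mod_two, neg_one_pow_eq_pow_mod_two (d + 1 + j)]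
      congr 1
      omega
    have hpow : ((k : ℝ) + 1) ^ (d + 3) =
        ((k : ℝ) + 1) ^ j * ((k : ℝ) + 1) ^ (d + 2 - j + 1) := by
      rw [← pow_add]
      congr 1
      omega
    rw [hcoeff, hsign, hpow]
    field_simp
  have hdeg : (descPochhammer ℝ (d + 1)).natDegree < d + 2 := by simp
  have key := eval_add_neg_one_pow_mul_eval_neg hdeg (d + 1) ((k : ℝ) + 1)
  rw [descPochhammer_eval_natCast_add_one,
    neg_one_pow_mul_descPochhammer_eval_neg_natCast_add_one] at key
  rw [sum_congr rfl hterm, ← sum_div, ← key]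
  field_simp
  ring

lemma summable_one_div_nat_add_one_pow {p : ℕ} (hp : 2 ≤ p) :
    Summable fun k : ℕ => 1 / ((k : ℝ) + 1) ^ p := by
  simpa using (summable_nat_add_iff 1).mpr (summable_one_div_nat_pow.mpr hp)

lemma one_add_neg_one_pow_mul_tsum_one_div_nat_add_one_pow {p : ℕ} (hp : 2 ≤ p) :
    (1 + (-1) ^ p) * ∑' k : ℕ, 1 / ((k : ℝ) + 1) ^ p =
      (2 * π) ^ p * |(bernoulli p : ℝ)| / p ! := by
  rcases Nat.even_or_odd' p with ⟨t, rfl | rfl⟩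
  · have ht : t ≠ 0 := by omega
    have hsum := (hasSum_nat_add_iff' 1).mpr (hasSum_zeta_nat ht)
    simp only [range_one, sum_singleton, Nat.cast_add, Nat.cast_one, Nat.cast_zero,
      zero_pow (mul_ne_zero two_ne_zero ht), div_zero, sub_zero] at hsum
    have hpos : 0 < ∑' k : ℕ, 1 / ((k : ℝ) + 1) ^ (2 * t) :=
      hsum.summable.tsum_pos (fun _ => by positivity) 0 (by norm_num)
    -- The sign `(-1) ^ (t + 1)` in Euler's formula is recovered from the positivity of the sum.
    rw [(even_two_mul t).neg_one_pow, ← abs_of_pos (by positivity : (0 : ℝ) < (1 + 1) * _),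
      hsum.tsum_eq]
    have h2 : (2 : ℝ) ^ (2 * t) = 2 * 2 ^ (2 * t - 1) := (mul_pow_sub_one (by omega) 2).symm
    simp [abs_mul, abs_div, mul_pow, h2, abs_of_pos pi_pos]
    ring
  · have hodd : Odd (2 * t + 1) := odd_two_mul_add_one t
    rw [hodd.neg_one_pow, bernoulli_eq_zero_of_odd hodd hp]
    simp

/-- For `n ≥ 2`, writing `s(n-1, j)` for the signed Stirling numbers of the
first kind (the coefficient of `X^j` in `∏_{i=0}^{n-2} (X - i) ∈ ℤ[X]`) and `B_l` for the
Bernoulli numbers,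
`∑_{k≥1} k^{-n} [C(k+n-2, n-2) + C(k-1, n-2)]
  = ∑_{j=0}^{n-1} (2π)^{n-j+1} |B_{n-j+1}| / ((n-2)! (n-j+1)!) · s(n-1, j)`.
(The series is written with the index shift `k ↦ k+1`.) -/
theorem series_eq_stirling_bernoulli (n : ℕ) (hn : 2 ≤ n) :
    (∑' k : ℕ,
        (((k + n - 1).choose (n - 2) : ℝ) + ((k).choose (n - 2) : ℝ)) / ((k : ℝ) + 1) ^ n) =
      ∑ j ∈ Finset.range n,
        (2 * Real.pi) ^ (n - j + 1) * |((bernoulli (n - j + 1) : ℚ) : ℝ)| /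
            ((Nat.factorial (n - 2) : ℝ) * (Nat.factorial (n - j + 1) : ℝ)) *
          (((∏ i ∈ Finset.range (n - 1), (X - C (i : ℤ))).coeff j : ℤ) : ℝ) := by
  obtain ⟨d, rfl⟩ : ∃ d, n = d + 2 := ⟨n - 2, by omega⟩
  have hk : ∀ k, k + (d + 2) - 1 = k + d + 1 := fun k => by omega
  simp only [hk, Nat.add_sub_cancel, show d + 2 - 1 = d + 1 by omega,
    prod_range_X_sub_C_eq_descPochhammer, choose_add_choose_div_pow_eq_sum]
  have hexp : ∀ j ∈ range (d + 2), 2 ≤ d + 2 - j + 1 := fun j hj => by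
    have := mem_range.mp hj
    omega
  rw [Summable.tsum_finsetSum fun j hj =>
    ((summable_one_div_nat_add_one_pow (hexp j hj)).mul_left _).mul_left _]
  refine sum_congr rfl fun j hj => ?_
  rw [tsum_mul_left, tsum_mul_left, one_add_neg_one_pow_mul_tsum_one_div_nat_add_one_pow (hexp j hj)]
  ring
end

section
/- Fix an integer $n \geq 2$. For $0 \le j \le n-1$ let $s(n-1,j)$ be the coefficient of $X^j$ in $\prod_{i=0}^{n-2}(X-i) \in \mathbb{Z}[X]$, and let $\chi_{2 \mid l}$ equal $1$ if $l$ is even and $0$ otherwise. Then $\sum_{k=1}^{\infty} k^{-n}\left[\binom{k+n-2}{n-2} + \binom{k-1}{n-2}\right] = \sum_{j=0}^{n-1} \frac{2\, s(n-1,j)}{(n-2)!}\, \chi_{2 \mid (n-j+1)}\, \zeta(n-j+1)$, where $\zeta$ is the Riemann zeta function. -/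
open Polynomial Finset in
private lemma prod_range_X_sub_C_nat (r : ℕ) :
    (∏ i ∈ Finset.range r, (X - C (i : ℤ))) = descPochhammer ℤ r := by
  induction r with
  | zero => simp
  | succ r ih =>
      rw [Finset.prod_range_succ, ih, descPochhammer_succ_right]
      simp [Polynomial.C_eq_natCast]

private lemma summable_aux (e : ℕ) (he : 2 ≤ e) :
    Summable (fun k : ℕ => 1 / ((k : ℂ) + 1) ^ e) := by
  have h : Summable (fun k : ℕ => 1 / ((k : ℝ)) ^ e) :=
    Real.summable_one_div_nat_pow.mpr (by omega)
  have h2 : Summable (fun k : ℕ => 1 / ((k : ℝ) + 1) ^ e) := by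
    have := (summable_nat_add_iff (f := fun k : ℕ => 1 / (k : ℝ) ^ e) 1).mpr h
    simpa using this
  refine Summable.of_norm (h2.congr fun k => ?_)
  have hx : ((k : ℂ) + 1) = ((k + 1 : ℕ) : ℂ) := by push_cast; ring
  rw [hx, norm_div, norm_one, norm_pow, Complex.norm_natCast]
  push_cast; ring

private lemma tsum_zeta_aux (e : ℕ) (he : 2 ≤ e) :
    ∑' k : ℕ, 1 / ((k : ℂ) + 1) ^ e = riemannZeta ((e : ℕ) : ℂ) := by
  rw [zeta_nat_eq_tsum_of_gt_one (by omega : 1 < e)]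
  have hs : Summable (fun k : ℕ => 1 / (k : ℂ) ^ e) := by
    have h : Summable (fun k : ℕ => 1 / ((k : ℝ)) ^ e) :=
      Real.summable_one_div_nat_pow.mpr (by omega)
    refine Summable.of_norm (h.congr fun k => ?_)
    rw [norm_div, norm_one, norm_pow, Complex.norm_natCast]
  rw [Summable.tsum_eq_zero_add hs]
  rw [Nat.cast_zero, zero_pow (by omega : e ≠ 0), div_zero, zero_add]
  refine tsum_congr fun k => ?_
  push_cast; ring_nf

open Polynomial Finset in
private lemma key_eval (m k : ℕ) :
    ((Nat.factorial m : ℂ)) * ((k : ℂ) + 1) *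
        (((k + m + 1).choose m : ℂ) + ((k).choose m : ℂ))
      = (descPochhammer ℂ (m + 1)).eval ((k : ℂ) + 1)
        + (-1 : ℂ) ^ (m + 3) * (descPochhammer ℂ (m + 1)).eval (-((k : ℂ) + 1)) := by
  have hx : ((k : ℂ) + 1) = ((k + 1 : ℕ) : ℂ) := by push_cast; ring
  have hdesc : (descPochhammer ℂ (m + 1)).eval (((k + 1 : ℕ)) : ℂ)
      = ((k + 1).descFactorial (m + 1) : ℂ) :=
    descPochhammer_eval_eq_descFactorial ℂ (k + 1) (m + 1)
  have hasc0 := ascPochhammer_eval_neg_eq_descPochhammer (R := ℂ) (-(((k + 1 : ℕ)) : ℂ)) (m + 1)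
  rw [neg_neg] at hasc0
  have hascnat : (ascPochhammer ℂ (m + 1)).eval (((k + 1 : ℕ)) : ℂ)
      = ((k + 1).ascFactorial (m + 1) : ℂ) := by
    rw [← ascPochhammer_eval_cast, ascPochhammer_nat_eq_ascFactorial]
  rw [hascnat] at hasc0
  have hneg : (descPochhammer ℂ (m + 1)).eval (-(((k + 1 : ℕ)) : ℂ))
      = (-1 : ℂ) ^ (m + 1) * ((k + 1).ascFactorial (m + 1) : ℂ) := by
    rw [hasc0, ← mul_assoc, ← pow_add, Even.neg_one_pow ⟨m + 1, rfl⟩, one_mul]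
  have hpow : (-1 : ℂ) ^ (m + 3) * ((-1 : ℂ) ^ (m + 1)) = 1 := by
    rw [← pow_add]
    exact Even.neg_one_pow ⟨m + 2, by ring⟩
  have hN1 : (k + 1).descFactorial (m + 1) = (k + 1) * (Nat.factorial m * k.choose m) := by
    rw [Nat.succ_descFactorial_succ, Nat.descFactorial_eq_factorial_mul_choose]
  have hN2 : (k + 1).ascFactorial (m + 1) = (k + 1) * (Nat.factorial m * (k + m + 1).choose m) := by
    rw [← Nat.add_descFactorial_eq_ascFactorial, Nat.descFactorial_succ,
      Nat.descFactorial_eq_factorial_mul_choose]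
    congr 1
    omega
  rw [hx, hdesc, hneg, ← mul_assoc, hpow, one_mul, hN1, hN2]
  push_cast
  ring

open Polynomial Finset in
private lemma key_sum (m : ℕ) (x : ℂ) :
    ∑ j ∈ Finset.range (m + 2),
        (if 2 ∣ (m + 2 - j + 1) then (2 : ℂ) else 0) *
          ((descPochhammer ℤ (m + 1)).coeff j : ℂ) * x ^ j
      = (descPochhammer ℂ (m + 1)).eval x
        + (-1 : ℂ) ^ (m + 3) * (descPochhammer ℂ (m + 1)).eval (-x) := by
  have hcoeff : ∀ j, ((descPochhammer ℤ (m + 1)).coeff j : ℂ)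
      = (descPochhammer ℂ (m + 1)).coeff j := by
    intro j
    rw [← descPochhammer_map (Int.castRingHom ℂ) (m + 1), coeff_map]
    simp
  have hdeg : (descPochhammer ℂ (m + 1)).natDegree < m + 2 := by
    rw [descPochhammer_natDegree]; omega
  rw [Polynomial.eval_eq_sum_range' hdeg, Polynomial.eval_eq_sum_range' hdeg,
    Finset.mul_sum, ← Finset.sum_add_distrib]
  refine Finset.sum_congr rfl fun j hj => ?_
  rw [hcoeff]
  have hj' : j < m + 2 := Finset.mem_range.mp hj
  set c := (descPochhammer ℂ (m + 1)).coeff j with hc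
  have hpow : ((-1 : ℂ)) ^ (m + 2 - j + 1) = (-1 : ℂ) ^ (m + 3) * (-1 : ℂ) ^ j := by
    have h1 : (m + 2 - j + 1) + 2 * j = (m + 3) + j := by omega
    calc ((-1 : ℂ)) ^ (m + 2 - j + 1)
        = (-1 : ℂ) ^ (m + 2 - j + 1) * ((-1 : ℂ) ^ 2) ^ j := by norm_num
      _ = (-1 : ℂ) ^ ((m + 2 - j + 1) + 2 * j) := by rw [← pow_mul, ← pow_add]
      _ = (-1 : ℂ) ^ ((m + 3) + j) := by rw [h1]
      _ = (-1 : ℂ) ^ (m + 3) * (-1 : ℂ) ^ j := by rw [pow_add]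
  have h2 : (if 2 ∣ (m + 2 - j + 1) then (2 : ℂ) else 0) = 1 + (-1 : ℂ) ^ (m + 2 - j + 1) := by
    rcases Nat.even_or_odd (m + 2 - j + 1) with h | h
    · rw [if_pos (even_iff_two_dvd.mp h), Even.neg_one_pow h]; norm_num
    · rw [if_neg (by rw [← even_iff_two_dvd]; exact (Nat.not_even_iff_odd).mpr h),
        Odd.neg_one_pow h]; norm_num
  rw [h2, hpow, neg_pow x j]
  ring

open Polynomial in
/-- For `n ≥ 2`, writing `s(n-1, j)` for the signed Stirling numbers of the
first kind (the coefficient of `X^j` in `∏_{i=0}^{n-2} (X - i) ∈ ℤ[X]`) and `ζ` for the Riemann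
zeta function,
`∑_{k≥1} k^{-n} [C(k+n-2, n-2) + C(k-1, n-2)]
  = ∑_{j=0}^{n-1} (2 s(n-1, j) / (n-2)!) · χ_{2 ∣ (n-j+1)} · ζ(n-j+1)`.
(The series is written with the index shift `k ↦ k+1`; the identity is stated in `ℂ`.) -/
theorem series_eq_stirling_zeta (n : ℕ) (hn : 2 ≤ n) :
    ((∑' k : ℕ,
        (((k + n - 1).choose (n - 2) : ℝ) + ((k).choose (n - 2) : ℝ)) / ((k : ℝ) + 1) ^ n : ℝ)
        : ℂ) =
      ∑ j ∈ Finset.range n,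
        2 * (((∏ i ∈ Finset.range (n - 1), (X - C (i : ℤ))).coeff j : ℤ) : ℂ) /
            (Nat.factorial (n - 2) : ℂ) *
          (if 2 ∣ (n - j + 1) then 1 else 0) * riemannZeta ((n - j + 1 : ℕ) : ℂ) := by
  obtain ⟨m, rfl⟩ : ∃ m, n = m + 2 := ⟨n - 2, by omega⟩
  simp only [show m + 2 - 2 = m from rfl, show m + 2 - 1 = m + 1 from rfl,
    show ∀ k : ℕ, k + (m + 2) - 1 = k + m + 1 from fun k => by omega,
    prod_range_X_sub_C_nat]
  set c : ℕ → ℂ := fun j =>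
    2 * ((descPochhammer ℤ (m + 1)).coeff j : ℂ) / (Nat.factorial m : ℂ) *
      (if 2 ∣ (m + 2 - j + 1) then 1 else 0) with hc
  have hsummable : ∀ j ∈ Finset.range (m + 2),
      Summable (fun k : ℕ => c j * (1 / ((k : ℂ) + 1) ^ (m + 2 - j + 1))) := by
    intro j hj
    have hj' : j < m + 2 := Finset.mem_range.mp hj
    exact (summable_aux (m + 2 - j + 1) (by omega)).mul_left _
  have hterm : ∀ k : ℕ,
      ((((((k + m + 1).choose m : ℝ) + ((k).choose m : ℝ)) / ((k : ℝ) + 1) ^ (m + 2) : ℝ)) : ℂ)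
      = ∑ j ∈ Finset.range (m + 2), c j * (1 / ((k : ℂ) + 1) ^ (m + 2 - j + 1)) := by
    intro k
    have hx0 : ((k : ℂ) + 1) ≠ 0 := by
      have : ((k : ℂ) + 1) = ((k + 1 : ℕ) : ℂ) := by push_cast; ring
      rw [this]
      exact Nat.cast_ne_zero.mpr (by omega)
    have hm0 : ((Nat.factorial m : ℂ)) ≠ 0 := by
      exact Nat.cast_ne_zero.mpr m.factorial_ne_zero
    have hsum := key_sum m ((k : ℂ) + 1)
    rw [← key_eval m k] at hsum
    -- rewrite each term of the target sum
    have hterms : ∀ j ∈ Finset.range (m + 2),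
        c j * (1 / ((k : ℂ) + 1) ^ (m + 2 - j + 1))
        = ((if 2 ∣ (m + 2 - j + 1) then (2 : ℂ) else 0) *
            ((descPochhammer ℤ (m + 1)).coeff j : ℂ) * ((k : ℂ) + 1) ^ j) /
            ((Nat.factorial m : ℂ) * ((k : ℂ) + 1) ^ (m + 3)) := by
      intro j hj
      have hj' : j < m + 2 := Finset.mem_range.mp hj
      have hsplit : ((k : ℂ) + 1) ^ (m + 3) = ((k : ℂ) + 1) ^ (m + 2 - j + 1) * ((k : ℂ) + 1) ^ j := by
        rw [← pow_add]
        congr 1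
        omega
      rw [hc]
      by_cases hdvd : 2 ∣ (m + 2 - j + 1)
      · simp only [if_pos hdvd]
        rw [hsplit]
        field_simp
      · simp only [if_neg hdvd]
        simp
    rw [Finset.sum_congr rfl hterms, ← Finset.sum_div, hsum]
    have hpowsplit : ((k : ℂ) + 1) ^ (m + 3) = ((k : ℂ) + 1) * ((k : ℂ) + 1) ^ (m + 2) := by
      rw [← pow_succ']
    push_cast
    rw [hpowsplit]
    field_simp
  calc ((∑' k : ℕ,
        (((k + m + 1).choose m : ℝ) + ((k).choose m : ℝ)) / ((k : ℝ) + 1) ^ (m + 2) : ℝ) : ℂ)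
      = ∑' k : ℕ, ∑ j ∈ Finset.range (m + 2),
          c j * (1 / ((k : ℂ) + 1) ^ (m + 2 - j + 1)) := by
        rw [Complex.ofReal_tsum]
        exact tsum_congr hterm
    _ = ∑ j ∈ Finset.range (m + 2), ∑' k : ℕ,
          c j * (1 / ((k : ℂ) + 1) ^ (m + 2 - j + 1)) := Summable.tsum_finsetSum hsummable
    _ = ∑ j ∈ Finset.range (m + 2),
          2 * ((descPochhammer ℤ (m + 1)).coeff j : ℂ) / (Nat.factorial m : ℂ) *
            (if 2 ∣ (m + 2 - j + 1) then 1 else 0) *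
            riemannZeta ((m + 2 - j + 1 : ℕ) : ℂ) := by
        refine Finset.sum_congr rfl fun j hj => ?_
        have hj' : j < m + 2 := Finset.mem_range.mp hj
        rw [tsum_mul_left, tsum_zeta_aux (m + 2 - j + 1) (by omega)]
end

section
/- Fix an integer $n \geq 2$. There exists a polynomial $P$ with rational coefficients such that $\frac{1}{2^n n!}\left( \sum_{k=1}^{\infty} k^{-n}\left[\binom{k+n-2}{n-2} + \binom{k-1}{n-2}\right] - \frac{1}{(n-1)^n} \right) = P(\pi^2)$; that is, the leading coefficient $\lim_{\lambda\to\infty} N(\lambda)/\lambda^n$ of the eigenvalue counting function is a rational polynomial in $\pi^2$. -/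
open Polynomial Real Finset

private lemma kohn_asc_prod (n N : ℕ) : ∏ i ∈ range N, (n + i) = n.ascFactorial N := by
  induction N with
  | zero => simp
  | succ m ih => rw [prod_range_succ, ih, Nat.ascFactorial_succ, mul_comm]

private noncomputable def kohnG (N : ℕ) : Polynomial ℚ :=
  ∏ i ∈ range N, (X + C (i + 1 : ℚ)) + ∏ i ∈ range N, (X - C (i + 1 : ℚ))

private lemma kohnG_natDegree_lt (N : ℕ) : (kohnG N).natDegree < N + 1 := by
  have h1 : (∏ i ∈ range N, (X + C (i + 1 : ℚ))).natDegree ≤ N := by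
    refine le_trans (Polynomial.natDegree_prod_le _ _) ?_
    refine le_trans (Finset.sum_le_card_nsmul _ _ 1 fun i _ => ?_) (by simp)
    rw [Polynomial.natDegree_X_add_C]
  have h2 : (∏ i ∈ range N, (X - C (i + 1 : ℚ))).natDegree ≤ N := by
    refine le_trans (Polynomial.natDegree_prod_le _ _) ?_
    refine le_trans (Finset.sum_le_card_nsmul _ _ 1 fun i _ => ?_) (by simp)
    rw [Polynomial.natDegree_X_sub_C]
  have := Polynomial.natDegree_add_le (∏ i ∈ range N, (X + C (i + 1 : ℚ)))
    (∏ i ∈ range N, (X - C (i + 1 : ℚ)))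
  unfold kohnG; omega

private lemma kohn_coeff_comp_negX (p : Polynomial ℚ) (j : ℕ) :
    (p.comp (-X)).coeff j = (-1) ^ j * p.coeff j := by
  induction p using Polynomial.induction_on' with
  | add p q hp hq => simp [Polynomial.add_comp, hp, hq, mul_add]
  | monomial k a =>
      rw [Polynomial.monomial_comp, neg_pow, ← mul_assoc, mul_comm (C a), mul_assoc,
        show ((-1 : Polynomial ℚ) ^ k) = C ((-1) ^ k) by simp, coeff_C_mul]
      rcases eq_or_ne j k with rfl | h
      · simp [coeff_monomial]
      · simp [coeff_monomial, coeff_X_pow, h, Ne.symm h]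

private lemma kohnG_coeff_eq_zero (N j : ℕ) (h : Odd (N + j)) : (kohnG N).coeff j = 0 := by
  set f : Polynomial ℚ := ∏ i ∈ range N, (X + C (i + 1 : ℚ)) with hf
  have h1 : f.comp (-X) = C ((-1) ^ N) * ∏ i ∈ range N, (X - C (i + 1 : ℚ)) := by
    rw [hf, Polynomial.prod_comp]
    rw [show (C ((-1 : ℚ) ^ N)) = ∏ _i ∈ range N, (C (-1) : Polynomial ℚ) by
      simp [Finset.prod_const]]
    rw [← Finset.prod_mul_distrib]
    refine Finset.prod_congr rfl fun i _ => ?_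
    rw [Polynomial.add_comp, Polynomial.X_comp, Polynomial.C_comp]
    simp; ring
  have h2 : (∏ i ∈ range N, (X - C (i + 1 : ℚ))).coeff j
      = (-1) ^ N * ((-1) ^ j * f.coeff j) := by
    have hthis := congrArg (fun p => Polynomial.coeff p j) h1
    simp only [coeff_C_mul, kohn_coeff_comp_negX] at hthis
    have h4 : ((-1 : ℚ) ^ N) * ((-1 : ℚ) ^ N) = 1 := by
      rw [← pow_add]; exact (neg_one_pow_eq_one_iff_even (by norm_num)).2 ⟨N, rfl⟩
    calc (∏ i ∈ range N, (X - C (i + 1 : ℚ))).coeff j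
        = ((-1) ^ N * (-1) ^ N) * (∏ i ∈ range N, (X - C (i + 1 : ℚ))).coeff j := by
          rw [h4, one_mul]
      _ = (-1) ^ N * ((-1) ^ j * f.coeff j) := by rw [mul_assoc, ← hthis]
  have h3 : (kohnG N).coeff j = f.coeff j + (-1) ^ N * ((-1) ^ j * f.coeff j) := by
    rw [kohnG, Polynomial.coeff_add, h2]
  rw [h3, ← mul_assoc, ← pow_add, Odd.neg_one_pow h]
  ring

private lemma kohnG_eval (N k : ℕ) :
    (Polynomial.aeval ((k : ℝ) + 1) (kohnG N)) =
      (Nat.factorial N : ℝ) * (((k + N + 1).choose N : ℝ) + ((k).choose N : ℝ)) := by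
  rw [kohnG, map_add, map_prod, map_prod]
  have hplus : ∏ i ∈ range N, (Polynomial.aeval ((k : ℝ) + 1) (X + C (i + 1 : ℚ)))
      = ((N.factorial * (k + N + 1).choose N : ℕ) : ℝ) := by
    have hc : ∀ i ∈ range N, Polynomial.aeval ((k : ℝ) + 1) (X + C (i + 1 : ℚ))
        = ((k + 2 + i : ℕ) : ℝ) := by
      intro i _
      rw [map_add, aeval_X, aeval_C]
      push_cast
      ring
    rw [Finset.prod_congr rfl hc, ← Nat.cast_prod, kohn_asc_prod,
      show k + 2 = (k + 1) + 1 from rfl, Nat.ascFactorial_eq_factorial_mul_choose]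
    norm_cast
    rw [show k + 1 + N = k + N + 1 by omega]
  have hminus : ∏ i ∈ range N, (Polynomial.aeval ((k : ℝ) + 1) (X - C (i + 1 : ℚ)))
      = ((N.factorial * k.choose N : ℕ) : ℝ) := by
    have hc : ∀ i ∈ range N, Polynomial.aeval ((k : ℝ) + 1) (X - C (i + 1 : ℚ))
        = (k : ℝ) - (i : ℝ) := by
      intro i _
      rw [map_sub, aeval_X, aeval_C]
      push_cast
      ring
    rw [Finset.prod_congr rfl hc]
    by_cases hk : k < N
    · rw [Finset.prod_eq_zero (Finset.mem_range.2 hk) (by simp),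
        Nat.choose_eq_zero_of_lt hk]
      simp
    · push_neg at hk
      have hc2 : ∀ i ∈ range N, (k : ℝ) - (i : ℝ) = ((k - i : ℕ) : ℝ) := by
        intro i hi
        have : i ≤ k := le_trans (le_of_lt (Finset.mem_range.1 hi)) hk
        push_cast [this]
        ring
      rw [Finset.prod_congr rfl hc2, ← Nat.cast_prod, ← Nat.descFactorial_eq_prod_range,
        Nat.descFactorial_eq_factorial_mul_choose]
  rw [hplus, hminus]
  push_cast
  ring

private lemma kohn_zeta_mem (t : ℕ) (ht : t ≠ 0) :
    (∑' k : ℕ, 1 / ((k : ℝ) + 1) ^ (2 * t)) ∈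
      (Polynomial.aeval (Real.pi ^ 2 : ℝ) : Polynomial ℚ →ₐ[ℚ] ℝ).range := by
  set A := (Polynomial.aeval (Real.pi ^ 2 : ℝ) : Polynomial ℚ →ₐ[ℚ] ℝ).range with hA
  have hrat : ∀ q : ℚ, (q : ℝ) ∈ A := fun q => by
    have h := A.algebraMap_mem q
    rwa [eq_ratCast] at h
  have hpi : (Real.pi ^ 2 : ℝ) ∈ A := by
    rw [hA, AlgHom.mem_range]
    exact ⟨X, aeval_X _⟩
  have hz := hasSum_zeta_nat ht
  have hsummable := hz.summable
  have h0 := Summable.tsum_eq_zero_add hsummable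
  have h1 : (∑' k : ℕ, 1 / ((k : ℝ) + 1) ^ (2 * t)) = ∑' m : ℕ, 1 / (m : ℝ) ^ (2 * t) := by
    rw [h0]
    have hzz : (1 : ℝ) / ((0 : ℕ) : ℝ) ^ (2 * t) = 0 := by
      rw [Nat.cast_zero, zero_pow (by omega), div_zero]
    rw [hzz, zero_add]
    exact tsum_congr fun k => by push_cast; ring
  rw [h1, hz.tsum_eq]
  have h2 : ((-1 : ℝ) ^ (t + 1) * (2 : ℝ) ^ (2 * t - 1) * π ^ (2 * t) *
        (_root_.bernoulli (2 * t) : ℝ) / ((2 * t).factorial : ℝ))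
      = (((-1 : ℚ) ^ (t + 1) * (2 : ℚ) ^ (2 * t - 1) * (_root_.bernoulli (2 * t)) /
          ((2 * t).factorial : ℚ)) : ℚ) * (Real.pi ^ 2) ^ t := by
    rw [← pow_mul]
    push_cast
    ring
  rw [h2]
  exact A.mul_mem (hrat _) (A.pow_mem hpi t)

/-- For `n ≥ 2`, the leading coefficient
`(1/(2^n n!)) (∑_{k≥1} k^{-n}[C(k+n-2,n-2) + C(k-1,n-2)] - 1/(n-1)^n)`
of the eigenvalue counting function of the Kohn Laplacian is a rational polynomial in `π²`.
(The series is written with the index shift `k ↦ k+1`.) -/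
theorem leading_coefficient_rational_poly_in_pi_sq (n : ℕ) (hn : 2 ≤ n) :
    ∃ P : Polynomial ℚ,
      (1 / (2 ^ n * (Nat.factorial n : ℝ))) *
          ((∑' k : ℕ,
              (((k + n - 1).choose (n - 2) : ℝ) + ((k).choose (n - 2) : ℝ)) /
                ((k : ℝ) + 1) ^ n) - 1 / ((n : ℝ) - 1) ^ n) =
        Polynomial.aeval (Real.pi ^ 2) P := by
  obtain ⟨N, rfl⟩ : ∃ N, n = N + 2 := ⟨n - 2, by omega⟩
  clear hn
  set A := (Polynomial.aeval (Real.pi ^ 2 : ℝ) : Polynomial ℚ →ₐ[ℚ] ℝ).range with hA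
  have main : ∀ x : ℝ, x ∈ A → ∃ P : Polynomial ℚ, x = Polynomial.aeval (Real.pi ^ 2) P := by
    rintro x ⟨P, hP⟩
    exact ⟨P, hP.symm⟩
  apply main
  have hrat : ∀ q : ℚ, (q : ℝ) ∈ A := fun q => by
    have h := A.algebraMap_mem q
    rwa [eq_ratCast] at h
  have hmem_of_eq : ∀ (x : ℝ) (q : ℚ), x = (q : ℝ) → x ∈ A := by
    rintro x q rfl; exact hrat q
  have hfac0 : (Nat.factorial N : ℝ) ≠ 0 := Nat.cast_ne_zero.2 (Nat.factorial_ne_zero N)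
  -- term-by-term expansion
  have hterm : ∀ k : ℕ,
      (((k + (N + 2) - 1).choose ((N + 2) - 2) : ℝ) + ((k).choose ((N + 2) - 2) : ℝ)) /
          ((k : ℝ) + 1) ^ (N + 2)
        = ∑ j ∈ range (N + 1),
            ((kohnG N).coeff j : ℝ) / (Nat.factorial N : ℝ) *
              (1 / ((k : ℝ) + 1) ^ (N + 2 - j)) := by
    intro k
    have hxpos : (0 : ℝ) < (k : ℝ) + 1 := by positivity
    have hx : ((k : ℝ) + 1) ≠ 0 := ne_of_gt hxpos
    rw [show k + (N + 2) - 1 = k + N + 1 by omega, show (N + 2) - 2 = N by omega]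
    have hexp := Polynomial.aeval_eq_sum_range' (kohnG_natDegree_lt N) ((k : ℝ) + 1)
    rw [kohnG_eval] at hexp
    have hnum : ((k + N + 1).choose N : ℝ) + ((k).choose N : ℝ)
        = (∑ j ∈ range (N + 1), ((kohnG N).coeff j : ℝ) * ((k : ℝ) + 1) ^ j) /
            (Nat.factorial N : ℝ) := by
      rw [eq_div_iff hfac0, mul_comm, hexp]
      exact Finset.sum_congr rfl fun j _ => by rw [Rat.smul_def]
    rw [hnum, div_div, Finset.sum_div]
    refine Finset.sum_congr rfl fun j hj => ?_
    have hj' : j ≤ N := by have := Finset.mem_range.1 hj; omega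
    have hxp : ((k : ℝ) + 1) ^ (N + 2)
        = ((k : ℝ) + 1) ^ j * ((k : ℝ) + 1) ^ (N + 2 - j) := by
      rw [← pow_add]; congr 1; omega
    rw [hxp]
    have hx1 : ((k : ℝ) + 1) ^ j ≠ 0 := pow_ne_zero _ hx
    have hx2 : ((k : ℝ) + 1) ^ (N + 2 - j) ≠ 0 := pow_ne_zero _ hx
    field_simp
  -- summability of each summand
  have hsummand : ∀ j, j ≤ N → Summable (fun k : ℕ =>
      ((kohnG N).coeff j : ℝ) / (Nat.factorial N : ℝ) *
        (1 / ((k : ℝ) + 1) ^ (N + 2 - j))) := by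
    intro j hj
    have h1 : Summable (fun k : ℕ => 1 / ((k : ℝ)) ^ (N + 2 - j)) :=
      summable_one_div_nat_pow.mpr (by omega)
    have h2 := (summable_nat_add_iff (f := fun k : ℕ => 1 / ((k : ℝ)) ^ (N + 2 - j)) 1).mpr h1
    have h3 : Summable (fun k : ℕ => 1 / ((k : ℝ) + 1) ^ (N + 2 - j)) := by
      refine h2.congr fun k => ?_
      push_cast
      ring
    exact h3.mul_left _
  -- swap sum and tsum
  have hts : (∑' k : ℕ,
        (((k + (N + 2) - 1).choose ((N + 2) - 2) : ℝ) + ((k).choose ((N + 2) - 2) : ℝ)) /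
          ((k : ℝ) + 1) ^ (N + 2))
      = ∑ j ∈ range (N + 1),
          ((kohnG N).coeff j : ℝ) / (Nat.factorial N : ℝ) *
            (∑' k : ℕ, 1 / ((k : ℝ) + 1) ^ (N + 2 - j)) := by
    rw [tsum_congr hterm,
      Summable.tsum_finsetSum fun j hj => hsummand j (by have := Finset.mem_range.1 hj; omega)]
    exact Finset.sum_congr rfl fun j _ => tsum_mul_left
  -- membership
  refine A.mul_mem (hmem_of_eq _ (1 / (2 ^ (N + 2) * ((N + 2).factorial : ℚ))) ?_)
    (A.sub_mem ?_ (hmem_of_eq _ (1 / ((N + 1 : ℚ)) ^ (N + 2)) ?_))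
  · push_cast
    ring
  · rw [hts]
    refine Subalgebra.sum_mem A fun j hj => ?_
    have hjN : j ≤ N := by have := Finset.mem_range.1 hj; omega
    by_cases hodd : Odd (N + j)
    · rw [kohnG_coeff_eq_zero N j hodd]
      simpa using A.zero_mem
    · rw [Nat.not_odd_iff_even] at hodd
      obtain ⟨r, hr⟩ := hodd
      have h2t : N + 2 - j = 2 * ((N + 2 - j) / 2) := by omega
      refine A.mul_mem (hmem_of_eq _ ((kohnG N).coeff j / (Nat.factorial N : ℚ)) (by push_cast; ring)) ?_
      rw [h2t]
      exact kohn_zeta_mem _ (by omega)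
  · push_cast
    ring
end
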